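/- (Tower construction.) Let ℱ¹⋉s be a fort of length ℓ, and let 𝒞₁,…,𝒞ₙ be the integer cells of ℱ¹ ordered compatibly with their order in ℝ. Suppose that for each i with 𝒞ᵢ an interval one is given a fort ℱᵢ of length ℓ and a morphism φᵢ: ℱᵢ→(0,1)⋉s(𝒞ᵢ) (the fort over (0,1) with constant fiber s(𝒞ᵢ)), and that for each i with 𝒞ᵢ a point one is given a fort 𝒦ᵢ of length ℓ−1 and a morphism ψᵢ: 𝒦ᵢ→s(𝒞ᵢ); in the latter case set ℱᵢ := {0}×𝒦ᵢ and φᵢ := id_{{0}}×ψᵢ. Let mᵢ := sup π₁(ℱᵢ) (so mᵢ=0 when 𝒞ᵢ is a point) and m₀ := 0. Then ℱ := ⋃_{i=1}^{n} t_{m₀+…+m_{i−1}}(ℱᵢ) is a fort of length ℓ, where t_m(x₁,…,x_ℓ) := (x₁+m,x₂,…,x_ℓ), and the map φ: ℱ→ℱ¹⋉s which on t_{m₀+…+m_{i−1}}(ℱᵢ) equals the composition of t_{−(m₀+…+m_{i−1})}, then φᵢ, then the translation in the first coordinate carrying b(𝒞ᵢ) onto 𝒞ᵢ (where b(𝒞ᵢ)=(0,1)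 if 𝒞ᵢ is an interval and b(𝒞ᵢ)={0} if 𝒞ᵢ is a point), is a morphism of forts. -/

import Mathlib

open Set

namespace Forts

/-- An integer cell of length 1: a singleton `{k}` or an open interval `(k, k+1)`, `k : ℤ`. -/
def Cell1 (S : Set ℝ) : Prop :=
  ∃ k : ℤ, S = {(k : ℝ)} ∨ S = Set.Ioo (k : ℝ) ((k : ℝ) + 1)

/-- An integer cell of length ℓ: a product of ℓ integer cells of length 1. -/
def Cell {ℓ : ℕ} (S : Set (Fin ℓ → ℝ)) : Prop :=
  ∃ c : Fin ℓ → Set ℝ, (∀ i, Cell1 (c i)) ∧ S = {x | ∀ i, x i ∈ c i}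

/-- `cellsOf S` is the collection of integer cells contained in `S`. -/
def cellsOf {ℓ : ℕ} (S : Set (Fin ℓ → ℝ)) : Set (Set (Fin ℓ → ℝ)) :=
  {C | Cell C ∧ C ⊆ S}

/-- Forts, defined inductively along the first coordinate: a fort of length 1 is an
interval `(0, n)` with `n ≥ 1`; given a fort `F1` of length 1 and an assignment `s` of a
fort of length ℓ to each integer cell of `F1`, the set `F1 ⋉ s = ⋃_{C ∈ C(F1)} C × s(C)`
is a fort of length `ℓ + 1`. -/
inductive Fort : (ℓ : ℕ) → Set (Fin ℓ → ℝ) → Prop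
  | base (n : ℕ) (hn : 0 < n) : Fort 1 {x : Fin 1 → ℝ | x 0 ∈ Set.Ioo (0 : ℝ) (n : ℝ)}
  | step {ℓ : ℕ} (F1 : Set (Fin 1 → ℝ)) (s : Set (Fin 1 → ℝ) → Set (Fin ℓ → ℝ))
      (hF1 : Fort 1 F1) (hs : ∀ C ∈ cellsOf F1, Fort ℓ (s C)) :
      Fort (ℓ + 1)
        {x : Fin (ℓ + 1) → ℝ | ∃ C ∈ cellsOf F1, (fun _ : Fin 1 => x 0) ∈ C ∧ Fin.tail x ∈ s C}

/-- A map between subsets of ℝ^ℓ is precellular if each coordinate function depends only on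
the first `i` coordinates and is strictly increasing in the `i`-th coordinate. -/
def Precellular {ℓ : ℕ} (X : Set (Fin ℓ → ℝ)) (f : (Fin ℓ → ℝ) → (Fin ℓ → ℝ)) : Prop :=
  (∀ i : Fin ℓ, ∀ x ∈ X, ∀ y ∈ X, (∀ j : Fin ℓ, j ≤ i → x j = y j) → f x i = f y i) ∧
  (∀ i : Fin ℓ, ∀ x ∈ X, ∀ y ∈ X, (∀ j : Fin ℓ, j < i → x j = y j) → x i < y i → f x i < f y i)

/-- A morphism of forts: surjective, precellular, maps integer cells into integer cells, and
is continuous on each integer cell. -/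
def Morphism {ℓ : ℕ} (F G : Set (Fin ℓ → ℝ)) (φ : (Fin ℓ → ℝ) → (Fin ℓ → ℝ)) : Prop :=
  φ '' F = G ∧ Precellular F φ ∧
    ∀ C ∈ cellsOf F, (∃ C₂ ∈ cellsOf G, φ '' C ⊆ C₂) ∧ ContinuousOn φ C

/-- Two morphisms are combinatorially equivalent if they map each integer cell of the source
into the same integer cell of the target. -/
def CombEquiv {ℓ : ℕ} (F G : Set (Fin ℓ → ℝ)) (φ ψ : (Fin ℓ → ℝ) → (Fin ℓ → ℝ)) : Prop :=
  ∀ C ∈ cellsOf F, ∃ C₂ ∈ cellsOf G, φ '' C ⊆ C₂ ∧ ψ '' C ⊆ C₂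

/-- Projection to the first `i` coordinates. -/
def proj {ℓ : ℕ} (i : ℕ) (h : i ≤ ℓ) (x : Fin ℓ → ℝ) : Fin i → ℝ :=
  fun j => x (Fin.castLE h j)

/-- The last `ℓ - i` coordinates. -/
def tailpart {ℓ i : ℕ} (h : i ≤ ℓ) (x : Fin ℓ → ℝ) : Fin (ℓ - i) → ℝ :=
  fun j => x ⟨i + (j : ℕ), by have := j.2; omega⟩

/-- Glue a prefix of length `i` with a suffix of length `ℓ - i`. -/
def glue {ℓ i : ℕ} (h : i ≤ ℓ) (x : Fin i → ℝ) (y : Fin (ℓ - i) → ℝ) : Fin ℓ → ℝ :=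
  fun j => if hj : (j : ℕ) < i then x ⟨(j : ℕ), hj⟩
    else y ⟨(j : ℕ) - i, by have := j.2; omega⟩

/-- The fiber `X_x = {y : (x, y) ∈ X}` of `X ⊆ ℝ^ℓ` over `x ∈ ℝ^i`. -/
def fiber {ℓ i : ℕ} (h : i ≤ ℓ) (X : Set (Fin ℓ → ℝ)) (x : Fin i → ℝ) :
    Set (Fin (ℓ - i) → ℝ) :=
  {y | glue h x y ∈ X}

end Forts

namespace Forts

/-- The fort `(0, n)` of length 1. -/
def F1set (n : ℕ) : Set (Fin 1 → ℝ) := {x | x 0 ∈ Set.Ioo (0 : ℝ) (n : ℝ)}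

/-- The `i`-th integer cell of `(0, n)` (0-indexed, ordered compatibly with ℝ):
`(i/2, i/2 + 1)` for even `i`, the point `{(i+1)/2}` for odd `i`. -/
def cSeq (i : ℕ) : Set (Fin 1 → ℝ) :=
  if i % 2 = 0 then {x | x 0 ∈ Set.Ioo (((i / 2 : ℕ) : ℝ)) (((i / 2 : ℕ) : ℝ) + 1)}
  else {x | x 0 = (((i + 1) / 2 : ℕ) : ℝ)}

/-- The fort `ℱ¹ ⋉ s` over `ℱ¹ = (0, n)`. -/
def ltimes {m : ℕ} (n : ℕ) (s : Set (Fin 1 → ℝ) → Set (Fin m → ℝ)) :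
    Set (Fin (m + 1) → ℝ) :=
  {x | ∃ C ∈ cellsOf (F1set n), (fun _ : Fin 1 => x 0) ∈ C ∧ Fin.tail x ∈ s C}

/-- Translation by `a` in the first coordinate: `t_a(x₁, …, x_ℓ) = (x₁ + a, x₂, …, x_ℓ)`. -/
def tmap {m : ℕ} (a : ℝ) (x : Fin (m + 1) → ℝ) : Fin (m + 1) → ℝ :=
  fun j => if j = 0 then x 0 + a else x j

/-- The offset `m₀ + ⋯ + m_{i-1}` where `m_j = sup π₁(ℱ_j)`. -/
noncomputable def offsets {m : ℕ} (F : ℕ → Set (Fin (m + 1) → ℝ)) (i : ℕ) : ℝ :=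
  ∑ j ∈ Finset.range i, sSup ((fun x : Fin (m + 1) → ℝ => x 0) '' F j)

/-- The translation amount carrying the basic cell `b(𝒞ᵢ)` onto `𝒞ᵢ`:
`i/2` if `𝒞ᵢ` is an interval, `(i+1)/2` if `𝒞ᵢ` is a point. -/
def tgtShift (i : ℕ) : ℝ :=
  if i % 2 = 0 then ((i / 2 : ℕ) : ℝ) else (((i + 1) / 2 : ℕ) : ℝ)

/-!
For `m ≥ 1`, forts of length `m + 1` are described fibrewise: `X` is one iff it lies over some
`(0, N)` and, over each integer cell `c ⊆ (0, N)`, is `c × G` for a fort `G` of length `m`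
(`IsFortOver`). This description only involves the cells under a set `R ⊆ ℝ`, so it survives
integer translation of the first coordinate and disjoint unions over sets `R` that are unions of
integer cells. The pieces `t_{m₀+⋯+m_{i-1}}(ℱᵢ)` lie over the consecutive intervals and points
of `(0, m₀ + ⋯ + m_{2n-2})`, where `mᵢ` is the length of the base of `ℱᵢ` (zero over a point
cell), hence the tower is a fort.

On each piece the map is `φᵢ` conjugated by integer translations, hence a morphism. These glue:
an integer cell of the tower lies in a single piece, and since the pieces as well as their target
cells `𝒞ᵢ` are ordered along the first coordinate, strict monotonicity in the first coordinate
persists across pieces.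
-/

section Translation

variable {m : ℕ}

@[simp] lemma tmap_apply_zero (a : ℝ) (x : Fin (m + 1) → ℝ) : tmap a x 0 = x 0 + a := if_pos rfl

lemma tmap_apply_of_ne_zero (a : ℝ) (x : Fin (m + 1) → ℝ) {j : Fin (m + 1)} (hj : j ≠ 0) :
    tmap a x j = x j := if_neg hj

@[simp] lemma tail_tmap (a : ℝ) (x : Fin (m + 1) → ℝ) : Fin.tail (tmap a x) = Fin.tail x :=
  funext fun j => tmap_apply_of_ne_zero a x j.succ_ne_zero

lemma tmap_eq_cons (a : ℝ) (x : Fin (m + 1) → ℝ) :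
    tmap a x = Fin.cons (x 0 + a) (Fin.tail x) := by
  rw [← Fin.cons_self_tail (tmap a x), tmap_apply_zero, tail_tmap]

@[simp] lemma tmap_tmap (a b : ℝ) (x : Fin (m + 1) → ℝ) : tmap a (tmap b x) = tmap (b + a) x := by
  rw [tmap_eq_cons a, tmap_apply_zero, tail_tmap, tmap_eq_cons, add_assoc]

@[simp] lemma tmap_zero (x : Fin (m + 1) → ℝ) : tmap 0 x = x := by
  rw [tmap_eq_cons, add_zero, Fin.cons_self_tail]

lemma continuous_tmap (a : ℝ) : Continuous (tmap (m := m) a) :=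
  continuous_pi fun j => by
    unfold tmap
    split_ifs <;> fun_prop

lemma mem_image_tmap_iff {a : ℝ} {S : Set (Fin (m + 1) → ℝ)} {x : Fin (m + 1) → ℝ} :
    x ∈ tmap a '' S ↔ tmap (-a) x ∈ S := by
  constructor
  · rintro ⟨y, hy, rfl⟩
    simpa using hy
  · intro h
    exact ⟨tmap (-a) x, h, by simp⟩

lemma image_tmap_prod (a : ℝ) (B : Set ℝ) (G : Set (Fin m → ℝ)) :
    tmap a '' {x : Fin (m + 1) → ℝ | x 0 ∈ B ∧ Fin.tail x ∈ G} =
      {x : Fin (m + 1) → ℝ | x 0 ∈ (· + a) '' B ∧ Fin.tail x ∈ G} := by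
  ext x
  rw [mem_image_tmap_iff]
  simp

end Translation

section Cells

lemma Cell1.nonempty {c : Set ℝ} (h : Cell1 c) : c.Nonempty := by
  obtain ⟨k, rfl | rfl⟩ := h
  · exact singleton_nonempty _
  · exact nonempty_Ioo.mpr (by linarith)

lemma not_intCast_mem_Ioo (k z : ℤ) : (z : ℝ) ∉ Ioo (k : ℝ) (k + 1) := by
  rintro ⟨h₁, h₂⟩
  have : k < z := by exact_mod_cast h₁
  have : z < k + 1 := by exact_mod_cast h₂
  omega

lemma Cell1.eq_of_mem {c d : Set ℝ} (hc : Cell1 c) (hd : Cell1 d) {p : ℝ} (hpc : p ∈ c)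
    (hpd : p ∈ d) : c = d := by
  obtain ⟨k, rfl | rfl⟩ := hc <;> obtain ⟨l, rfl | rfl⟩ := hd
  · rw [mem_singleton_iff] at hpc hpd
    rw [← hpc, hpd]
  · exact absurd (mem_singleton_iff.mp hpc ▸ hpd) (not_intCast_mem_Ioo l k)
  · exact absurd (mem_singleton_iff.mp hpd ▸ hpc) (not_intCast_mem_Ioo k l)
  · have : k < l + 1 := by exact_mod_cast (show (k : ℝ) < l + 1 by linarith [hpc.1, hpd.2])
    have : l < k + 1 := by exact_mod_cast (show (l : ℝ) < k + 1 by linarith [hpc.2, hpd.1])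
    obtain rfl : k = l := by omega
    rfl

lemma exists_cell1_mem (p : ℝ) : ∃ c, Cell1 c ∧ p ∈ c := by
  rcases (Int.floor_le p).eq_or_lt with h | h
  · exact ⟨_, ⟨⌊p⌋, Or.inl rfl⟩, h.symm⟩
  · exact ⟨_, ⟨⌊p⌋, Or.inr rfl⟩, h, Int.lt_floor_add_one p⟩

lemma Cell1.image_add_intCast {c : Set ℝ} (hc : Cell1 c) (k : ℤ) :
    Cell1 ((· + (k : ℝ)) '' c) := by
  obtain ⟨l, rfl | rfl⟩ := hc
  · exact ⟨l + k, Or.inl (by simp)⟩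
  · exact ⟨l + k, Or.inr (by simp [add_right_comm])⟩

variable {ℓ : ℕ}

lemma Cell.nonempty {C : Set (Fin ℓ → ℝ)} (hC : Cell C) : C.Nonempty := by
  obtain ⟨c, hc, rfl⟩ := hC
  choose x hx using fun j => (hc j).nonempty
  exact ⟨x, hx⟩

lemma Cell.eq_of_mem {C D : Set (Fin ℓ → ℝ)} (hC : Cell C) (hD : Cell D) {x : Fin ℓ → ℝ}
    (hxC : x ∈ C) (hxD : x ∈ D) : C = D := by
  obtain ⟨c, hc, rfl⟩ := hC
  obtain ⟨d, hd, rfl⟩ := hD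
  obtain rfl : c = d := funext fun j => (hc j).eq_of_mem (hd j) (hxC j) (hxD j)
  rfl

lemma cell_fin_one_iff {C : Set (Fin 1 → ℝ)} : Cell C ↔ ∃ c, Cell1 c ∧ C = {x | x 0 ∈ c} := by
  constructor
  · rintro ⟨c, hc, rfl⟩
    exact ⟨c 0, hc 0, by ext x; simp [Fin.forall_fin_one]⟩
  · rintro ⟨c, hc, rfl⟩
    exact ⟨fun _ => c, fun _ => hc, by ext x; simp [Fin.forall_fin_one]⟩

lemma cell_succ_iff {C : Set (Fin (ℓ + 1) → ℝ)} :
    Cell C ↔ ∃ c D, Cell1 c ∧ Cell D ∧ C = {x : Fin (ℓ + 1) → ℝ | x 0 ∈ c ∧ Fin.tail x ∈ D} := by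
  constructor
  · rintro ⟨c, hc, rfl⟩
    exact ⟨c 0, _, hc 0, ⟨Fin.tail c, fun j => hc j.succ, rfl⟩,
      by ext x; simp [Fin.forall_fin_succ, Fin.tail]⟩
  · rintro ⟨c, _, hc, ⟨d, hd, rfl⟩, rfl⟩
    exact ⟨Fin.cons c d, Fin.cases hc hd, by ext x; simp [Fin.forall_fin_succ, Fin.tail]⟩

lemma Cell.image_tmap {C : Set (Fin (ℓ + 1) → ℝ)} (hC : Cell C) (k : ℤ) :
    Cell (tmap (k : ℝ) '' C) := by
  obtain ⟨c, D, hc, hD, rfl⟩ := cell_succ_iff.mp hC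
  rw [image_tmap_prod]
  exact cell_succ_iff.mpr ⟨_, D, hc.image_add_intCast k, hD, rfl⟩

def CellSaturated (R : Set ℝ) : Prop :=
  ∀ c, Cell1 c → ∀ p ∈ c, p ∈ R → c ⊆ R

lemma cellSaturated_Ioo_intCast (a b : ℤ) : CellSaturated (Ioo (a : ℝ) b) := by
  rintro c ⟨k, rfl | rfl⟩ p hp ⟨hap, hpb⟩
  · rw [singleton_subset_iff, ← mem_singleton_iff.mp hp]
    exact ⟨hap, hpb⟩
  · have : a < k + 1 := by exact_mod_cast (show (a : ℝ) < k + 1 by linarith [hp.2])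
    have : k < b := by exact_mod_cast (show (k : ℝ) < b by linarith [hp.1])
    have hak : (a : ℝ) ≤ k := by exact_mod_cast (show a ≤ k by omega)
    have hkb : (k : ℝ) + 1 ≤ b := by exact_mod_cast (show k + 1 ≤ b by omega)
    exact Ioo_subset_Ioo hak hkb

lemma cellSaturated_singleton_intCast (a : ℤ) : CellSaturated {(a : ℝ)} := by
  rintro c ⟨k, rfl | rfl⟩ p hp hpa
  · rw [← mem_singleton_iff.mp hp, mem_singleton_iff.mp hpa]
  · exact absurd (mem_singleton_iff.mp hpa ▸ hp) (not_intCast_mem_Ioo k a)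

end Cells

section Families

lemma mem_of_mem_biUnion_of_pairwiseDisjoint {α β ι : Type*} {S : Finset ι} {P : ι → Set α}
    {R : ι → Set β} {f : α → β} (hP : ∀ i ∈ S, ∀ x ∈ P i, f x ∈ R i)
    (hR : (S : Set ι).PairwiseDisjoint R) {i : ι} (hi : i ∈ S) {x : α}
    (hx : x ∈ ⋃ j ∈ S, P j) (hxi : f x ∈ R i) : x ∈ P i := by
  obtain ⟨j, hj, hxj⟩ := mem_iUnion₂.mp hx
  obtain rfl := hR.elim hj hi (not_disjoint_iff.mpr ⟨f x, hP j hj x hxj, hxi⟩)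
  exact hxj

def StrictlyOrdered {ι : Type*} [LinearOrder ι] (S : Finset ι) (R : ι → Set ℝ) : Prop :=
  ∀ i ∈ S, ∀ j ∈ S, i < j → ∀ p ∈ R i, ∀ q ∈ R j, p < q

namespace StrictlyOrdered

variable {ι : Type*} [LinearOrder ι] {S : Finset ι} {R : ι → Set ℝ}

lemma le_of_mem_of_lt (hR : StrictlyOrdered S R) {i j : ι} (hi : i ∈ S) (hj : j ∈ S) {p q : ℝ}
    (hp : p ∈ R i) (hq : q ∈ R j) (hpq : p < q) : i ≤ j :=
  le_of_not_gt fun hji => (hR j hj i hi hji q hq p hp).not_gt hpq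

lemma pairwiseDisjoint (hR : StrictlyOrdered S R) : (S : Set ι).PairwiseDisjoint R := by
  intro i hi j hj hij
  refine disjoint_left.mpr fun p hpi hpj => ?_
  rcases hij.lt_or_gt with h | h
  · exact (hR i hi j hj h p hpi p hpj).false
  · exact (hR j hj i hi h p hpj p hpi).false

end StrictlyOrdered

end Families

section FortStructure

variable {m : ℕ}

lemma not_fort_zero (X : Set (Fin 0 → ℝ)) : ¬ Fort 0 X := by
  intro h
  cases h

lemma setOf_mem_cellsOf_F1set {n : ℕ} {c : Set ℝ} (hc : Cell1 c) (hcn : c ⊆ Ioo 0 n) :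
    {x : Fin 1 → ℝ | x 0 ∈ c} ∈ cellsOf (F1set n) :=
  ⟨cell_fin_one_iff.mpr ⟨c, hc, rfl⟩, fun _ hx => hcn hx⟩

lemma unit_cell_mem_cellsOf_F1set {n : ℕ} (hn : 0 < n) :
    {x : Fin 1 → ℝ | x 0 ∈ Ioo 0 1} ∈ cellsOf (F1set n) := by
  refine setOf_mem_cellsOf_F1set ⟨0, Or.inr (by simp)⟩ (Ioo_subset_Ioo_right ?_)
  exact_mod_cast hn

lemma Fort.eq_F1set {X : Set (Fin 1 → ℝ)} (h : Fort 1 X) : ∃ n, 0 < n ∧ X = F1set n := by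
  suffices ∀ {ℓ} {Y : Set (Fin ℓ → ℝ)}, Fort ℓ Y → ∀ _ : ℓ = 1, ∃ n, 0 < n ∧ HEq Y (F1set n) by
    obtain ⟨n, hn, hX⟩ := this h rfl
    exact ⟨n, hn, eq_of_heq hX⟩
  intro ℓ Y hY
  induction hY with
  | base n hn => exact fun _ => ⟨n, hn, HEq.rfl⟩
  | step F1 s _ hs ih _ =>
    rintro ⟨⟩
    obtain ⟨n, hn, hF1⟩ := ih rfl
    obtain rfl := eq_of_heq hF1
    exact absurd (hs _ (unit_cell_mem_cellsOf_F1set hn)) (not_fort_zero _)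

lemma Fort.nonempty {ℓ : ℕ} {X : Set (Fin ℓ → ℝ)} (h : Fort ℓ X) : X.Nonempty := by
  induction h with
  | base n hn =>
    refine ⟨fun _ => 1 / 2, by norm_num, ?_⟩
    have : (1 : ℝ) ≤ n := by exact_mod_cast hn
    show (1 / 2 : ℝ) < n
    linarith
  | step F1 s hF1 _ _ ih =>
    obtain ⟨n, hn, rfl⟩ := hF1.eq_F1set
    have hC := unit_cell_mem_cellsOf_F1set hn
    obtain ⟨y, hy⟩ := ih _ hC
    exact ⟨Fin.cons (1 / 2) y, _, hC, by norm_num, by rwa [Fin.tail_cons]⟩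

def IsFortOver (X : Set (Fin (m + 1) → ℝ)) (R : Set ℝ) : Prop :=
  (∀ x ∈ X, x 0 ∈ R) ∧ ∀ c, Cell1 c → c ⊆ R →
    ∃ G : Set (Fin m → ℝ), Fort m G ∧ ∀ x : Fin (m + 1) → ℝ, x 0 ∈ c → (x ∈ X ↔ Fin.tail x ∈ G)

lemma isFortOver_ltimes {a : ℕ} {t : Set (Fin 1 → ℝ) → Set (Fin m → ℝ)}
    (ht : ∀ C ∈ cellsOf (F1set a), Fort m (t C)) : IsFortOver (ltimes a t) (Ioo 0 a) := by
  refine ⟨fun x ⟨C, hC, hxC, _⟩ => hC.2 hxC, fun c hc hca => ?_⟩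
  have hC := setOf_mem_cellsOf_F1set hc hca
  refine ⟨_, ht _ hC, fun x hx => ⟨?_, fun hxt => ⟨_, hC, hx, hxt⟩⟩⟩
  rintro ⟨C', hC', hxC', hxt⟩
  rwa [hC'.1.eq_of_mem hC.1 hxC' hx] at hxt

lemma Fort.isFortOver (hm : m ≠ 0) {X : Set (Fin (m + 1) → ℝ)} (h : Fort (m + 1) X) :
    ∃ a : ℕ, 0 < a ∧ IsFortOver X (Ioo 0 a) := by
  cases h with
  | base => exact absurd rfl hm
  | step F1 t hF1 ht =>
    obtain ⟨a, ha, rfl⟩ := hF1.eq_F1set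
    exact ⟨a, ha, isFortOver_ltimes ht⟩

lemma isFortOver_zero_prod {K : Set (Fin m → ℝ)} (hK : Fort m K) :
    IsFortOver {x : Fin (m + 1) → ℝ | x 0 = 0 ∧ Fin.tail x ∈ K} {0} :=
  ⟨fun _ hx => hx.1, fun _ _ hc0 =>
    ⟨K, hK, fun _ hx => ⟨fun h => h.2, fun h => ⟨hc0 hx, h⟩⟩⟩⟩

lemma IsFortOver.image_tmap {X : Set (Fin (m + 1) → ℝ)} {R : Set ℝ} (h : IsFortOver X R)
    (k : ℤ) : IsFortOver (tmap (k : ℝ) '' X) ((· + (k : ℝ)) '' R) := by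
  refine ⟨fun x hx => ?_, fun c hc hcR => ?_⟩
  · obtain ⟨y, hy, rfl⟩ := hx
    exact ⟨y 0, h.1 y hy, (tmap_apply_zero _ y).symm⟩
  · have hc' : (· + ((-k : ℤ) : ℝ)) '' c ⊆ R := by
      rintro _ ⟨p, hp, rfl⟩
      obtain ⟨q, hq, rfl⟩ := hcR hp
      simpa using hq
    obtain ⟨G, hG, hXG⟩ := h.2 _ (hc.image_add_intCast (-k)) hc'
    refine ⟨G, hG, fun x hx => ?_⟩
    rw [mem_image_tmap_iff, hXG _ ⟨x 0, hx, by simp⟩, tail_tmap]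

lemma IsFortOver.biUnion {ι : Type*} {S : Finset ι} {X : ι → Set (Fin (m + 1) → ℝ)}
    {R : ι → Set ℝ} (hX : ∀ i ∈ S, IsFortOver (X i) (R i)) (hsat : ∀ i ∈ S, CellSaturated (R i))
    (hR : (S : Set ι).PairwiseDisjoint R) :
    IsFortOver (⋃ i ∈ S, X i) (⋃ i ∈ S, R i) := by
  have hXR : ∀ i ∈ S, ∀ x ∈ X i, x 0 ∈ R i := fun i hi => (hX i hi).1
  refine ⟨fun x hx => ?_, fun c hc hcR => ?_⟩
  · obtain ⟨i, hi, hxi⟩ := mem_iUnion₂.mp hx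
    exact mem_iUnion₂.mpr ⟨i, hi, hXR i hi x hxi⟩
  · obtain ⟨p, hp⟩ := hc.nonempty
    obtain ⟨i, hi, hpi⟩ := mem_iUnion₂.mp (hcR hp)
    have hci := hsat i hi c hc p hp hpi
    obtain ⟨G, hG, hXG⟩ := (hX i hi).2 c hc hci
    refine ⟨G, hG, fun x hx => ?_⟩
    rw [← hXG x hx]
    exact ⟨fun h => mem_of_mem_biUnion_of_pairwiseDisjoint hXR hR hi h (hci hx),
      fun h => mem_iUnion₂.mpr ⟨i, hi, h⟩⟩

lemma IsFortOver.fort {N : ℕ} (hN : 0 < N) {X : Set (Fin (m + 1) → ℝ)}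
    (h : IsFortOver X (Ioo 0 N)) : Fort (m + 1) X := by
  have hfib : ∀ C ∈ cellsOf (F1set N), ∃ G, Fort m G ∧
      ∀ x : Fin (m + 1) → ℝ, (fun _ : Fin 1 => x 0) ∈ C → (x ∈ X ↔ Fin.tail x ∈ G) := by
    rintro C ⟨hC, hCN⟩
    obtain ⟨c, hc, rfl⟩ := cell_fin_one_iff.mp hC
    exact h.2 c hc fun p hp => hCN (show (fun _ : Fin 1 => p) ∈ _ from hp)
  choose! G hG hXG using hfib
  convert Fort.step (F1set N) G (Fort.base N hN) hG using 1
  ext x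
  refine ⟨fun hx => ?_, fun ⟨C, hC, hxC, hxG⟩ => (hXG C hC x hxC).mpr hxG⟩
  obtain ⟨c, hc, hxc⟩ := exists_cell1_mem (x 0)
  have hsat : CellSaturated (Ioo (0 : ℝ) N) := by simpa using cellSaturated_Ioo_intCast 0 N
  have hC := setOf_mem_cellsOf_F1set hc (hsat c hc _ hxc (h.1 x hx))
  exact ⟨_, hC, hxc, (hXG _ hC x hxc).mp hx⟩

lemma IsFortOver.image_fst {X : Set (Fin (m + 1) → ℝ)} {R : Set ℝ} (h : IsFortOver X R)
    (hR : CellSaturated R) : (fun x => x 0) '' X = R := by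
  refine (image_subset_iff.mpr h.1).antisymm fun p hp => ?_
  obtain ⟨c, hc, hpc⟩ := exists_cell1_mem p
  obtain ⟨G, hG, hXG⟩ := h.2 c hc (hR c hc p hpc hp)
  obtain ⟨y, hy⟩ := hG.nonempty
  exact ⟨Fin.cons p y, (hXG _ hpc).mpr (by rwa [Fin.tail_cons]), Fin.cons_zero _ _⟩

end FortStructure

section Morphisms

variable {ℓ : ℕ}

lemma Morphism.congr {X Y : Set (Fin ℓ → ℝ)} {f g : (Fin ℓ → ℝ) → (Fin ℓ → ℝ)}
    (hf : Morphism X Y f) (hfg : EqOn f g X) : Morphism X Y g := by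
  obtain ⟨hsurj, ⟨hdep, hmono⟩, hcell⟩ := hf
  refine ⟨by rwa [← image_congr hfg], ⟨fun i x hx y hy h => ?_, fun i x hx y hy h hxy => ?_⟩,
    fun C hC => ?_⟩
  · rw [← hfg hx, ← hfg hy]
    exact hdep i x hx y hy h
  · rw [← hfg hx, ← hfg hy]
    exact hmono i x hx y hy h hxy
  · have hfgC := hfg.mono hC.2
    obtain ⟨⟨C₂, hC₂, hfC⟩, hcont⟩ := hcell C hC
    exact ⟨⟨C₂, hC₂, by rwa [← image_congr hfgC]⟩, hcont.congr hfgC.symm⟩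

lemma Morphism.comp {X Y Z : Set (Fin ℓ → ℝ)} {f g : (Fin ℓ → ℝ) → (Fin ℓ → ℝ)}
    (hf : Morphism X Y f) (hg : Morphism Y Z g) : Morphism X Z (g ∘ f) := by
  obtain ⟨hfsurj, ⟨hfdep, hfmono⟩, hfcell⟩ := hf
  obtain ⟨hgsurj, ⟨hgdep, hgmono⟩, hgcell⟩ := hg
  have hmaps : ∀ x ∈ X, f x ∈ Y := fun x hx => hfsurj ▸ mem_image_of_mem f hx
  refine ⟨by rw [image_comp, hfsurj, hgsurj],
    ⟨fun i x hx y hy h => ?_, fun i x hx y hy h hxy => ?_⟩, fun C hC => ?_⟩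
  · exact hgdep i _ (hmaps x hx) _ (hmaps y hy) fun j hji =>
      hfdep j x hx y hy fun k hkj => h k (hkj.trans hji)
  · exact hgmono i _ (hmaps x hx) _ (hmaps y hy)
      (fun j hji => hfdep j x hx y hy fun k hkj => h k (hkj.trans_lt hji))
      (hfmono i x hx y hy h hxy)
  · obtain ⟨⟨C₂, hC₂, hfC⟩, hfcont⟩ := hfcell C hC
    obtain ⟨⟨C₃, hC₃, hgC₂⟩, hgcont⟩ := hgcell C₂ hC₂
    refine ⟨⟨C₃, hC₃, ?_⟩, hgcont.comp hfcont (mapsTo_iff_image_subset.mpr hfC)⟩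
    rw [image_comp]
    exact (image_mono hfC).trans hgC₂

lemma morphism_tmap (X : Set (Fin (ℓ + 1) → ℝ)) (k : ℤ) :
    Morphism X (tmap (k : ℝ) '' X) (tmap (k : ℝ)) := by
  refine ⟨rfl, ⟨fun i x _ y _ h => ?_, fun i x _ y _ _ hxy => ?_⟩, fun C hC => ?_⟩
  · dsimp only [tmap]
    rw [h 0 (Fin.zero_le i), h i le_rfl]
  · dsimp only [tmap]
    split_ifs with hi
    · subst hi
      linarith
    · exact hxy
  · exact ⟨⟨_, ⟨hC.1.image_tmap k, image_mono hC.2⟩, subset_rfl⟩,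
      (continuous_tmap _).continuousOn⟩

lemma Morphism.zero_prod {K G : Set (Fin ℓ → ℝ)} {ψ : (Fin ℓ → ℝ) → (Fin ℓ → ℝ)}
    (hψ : Morphism K G ψ) :
    Morphism {x : Fin (ℓ + 1) → ℝ | x 0 = 0 ∧ Fin.tail x ∈ K}
      {x : Fin (ℓ + 1) → ℝ | x 0 = 0 ∧ Fin.tail x ∈ G}
      (fun x => Fin.cons 0 (ψ (Fin.tail x))) := by
  obtain ⟨hsurj, ⟨hdep, hmono⟩, hcell⟩ := hψ
  refine ⟨?_, ⟨fun i x hx y hy h => ?_, fun i x hx y hy h hxy => ?_⟩, fun C hC => ?_⟩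
  · ext z
    constructor
    · rintro ⟨x, hx, rfl⟩
      exact ⟨Fin.cons_zero _ _, by rw [Fin.tail_cons, ← hsurj]; exact mem_image_of_mem ψ hx.2⟩
    · rintro ⟨hz0, hzG⟩
      rw [← hsurj] at hzG
      obtain ⟨y, hy, hyz⟩ := hzG
      refine ⟨Fin.cons 0 y, ⟨Fin.cons_zero _ _, by rwa [Fin.tail_cons]⟩, ?_⟩
      simp only [Fin.tail_cons, hyz, ← hz0, Fin.cons_self_tail]
  · induction i using Fin.cases with
    | zero => rfl
    | succ i =>
      simp only [Fin.cons_succ]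
      exact hdep i _ hx.2 _ hy.2 fun j hji => h j.succ (Fin.succ_le_succ_iff.mpr hji)
  · induction i using Fin.cases with
    | zero => exact absurd hxy (by rw [hx.1, hy.1]; exact lt_irrefl 0)
    | succ i =>
      simp only [Fin.cons_succ]
      exact hmono i _ hx.2 _ hy.2 (fun j hji => h j.succ (Fin.succ_lt_succ_iff.mpr hji)) hxy
  · obtain ⟨hCcell, hCK⟩ := hC
    obtain ⟨c, D, hc, hD, rfl⟩ := cell_succ_iff.mp hCcell
    obtain ⟨p, hp⟩ := hc.nonempty
    have hDK : D ⊆ K := fun y hy => by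
      simpa using (hCK (show Fin.cons p y ∈ _ by simpa using ⟨hp, hy⟩)).2
    obtain ⟨⟨D₂, ⟨hD₂, hD₂G⟩, hψD⟩, hψcont⟩ := hcell D ⟨hD, hDK⟩
    refine ⟨⟨{x : Fin (ℓ + 1) → ℝ | x 0 ∈ {0} ∧ Fin.tail x ∈ D₂},
      ⟨cell_succ_iff.mpr ⟨_, _, ⟨0, Or.inl (by simp)⟩, hD₂, rfl⟩, fun x hx => ⟨hx.1, hD₂G hx.2⟩⟩,
      ?_⟩, ?_⟩
    · rintro _ ⟨x, hx, rfl⟩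
      exact ⟨Fin.cons_zero _ _, by rw [Fin.tail_cons]; exact hψD (mem_image_of_mem ψ hx.2)⟩
    · exact continuousOn_const.finCons
        (hψcont.comp (continuous_id.finTail.continuousOn) fun x hx => hx.2)

lemma Morphism.biUnion {ι : Type*} [LinearOrder ι] {S : Finset ι}
    {P Q : ι → Set (Fin (ℓ + 1) → ℝ)} {R T : ι → Set ℝ}
    {Φ : (Fin (ℓ + 1) → ℝ) → (Fin (ℓ + 1) → ℝ)}
    (hΦ : ∀ i ∈ S, Morphism (P i) (Q i) Φ) (hPR : ∀ i ∈ S, ∀ x ∈ P i, x 0 ∈ R i)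
    (hQT : ∀ i ∈ S, ∀ x ∈ Q i, x 0 ∈ T i) (hsat : ∀ i ∈ S, CellSaturated (R i))
    (hR : StrictlyOrdered S R) (hT : StrictlyOrdered S T) :
    Morphism (⋃ i ∈ S, P i) (⋃ i ∈ S, Q i) Φ := by
  have hpiece : ∀ i ∈ S, ∀ x, x ∈ ⋃ j ∈ S, P j → x 0 ∈ R i → x ∈ P i := fun i hi _ =>
    mem_of_mem_biUnion_of_pairwiseDisjoint hPR hR.pairwiseDisjoint hi
  refine ⟨?_, ⟨fun k x hx y hy h => ?_, fun k x hx y hy h hxy => ?_⟩, fun C hC => ?_⟩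
  · rw [image_iUnion₂]
    exact iUnion₂_congr fun i hi => (hΦ i hi).1
  · obtain ⟨i, hi, hxi⟩ := mem_iUnion₂.mp hx
    have hyi := hpiece i hi y hy (h 0 (Fin.zero_le k) ▸ hPR i hi x hxi)
    exact (hΦ i hi).2.1.1 k x hxi y hyi h
  · obtain ⟨i, hi, hxi⟩ := mem_iUnion₂.mp hx
    obtain ⟨j, hj, hyj⟩ := mem_iUnion₂.mp hy
    by_cases hyi : y ∈ P i
    · exact (hΦ i hi).2.1.2 k x hxi y hyi h hxy
    -- `x` and `y` lie in different pieces, met in increasing order, and so are their images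
    obtain rfl : k = 0 := by
      by_contra hk
      exact hyi (hpiece i hi y hy (h 0 (Fin.pos_iff_ne_zero.mpr hk) ▸ hPR i hi x hxi))
    have hij : i < j := ((hR.le_of_mem_of_lt hi hj (hPR i hi x hxi) (hPR j hj y hyj) hxy).lt_of_ne
      (by rintro rfl; exact hyi hyj))
    have hΦQ : ∀ i ∈ S, ∀ x ∈ P i, Φ x ∈ Q i := fun i hi x hx =>
      (hΦ i hi).1 ▸ mem_image_of_mem Φ hx
    exact hT i hi j hj hij _ (hQT i hi _ (hΦQ i hi x hxi)) _ (hQT j hj _ (hΦQ j hj y hyj))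
  · obtain ⟨hCcell, hCU⟩ := hC
    obtain ⟨c, D, hc, _, rfl⟩ := cell_succ_iff.mp hCcell
    obtain ⟨x₀, hx₀⟩ := hCcell.nonempty
    obtain ⟨i, hi, hx₀i⟩ := mem_iUnion₂.mp (hCU hx₀)
    have hcR := hsat i hi c hc _ hx₀.1 (hPR i hi x₀ hx₀i)
    have hCP : _ ⊆ P i := fun x hx => hpiece i hi x (hCU hx) (hcR hx.1)
    obtain ⟨⟨C₂, ⟨hC₂, hC₂Q⟩, hΦC⟩, hcont⟩ := (hΦ i hi).2.2 _ ⟨hCcell, hCP⟩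
    exact ⟨⟨C₂, ⟨hC₂, hC₂Q.trans (subset_biUnion_of_mem (u := Q) hi)⟩, hΦC⟩, hcont⟩

lemma Morphism.conj_tmap {X Y : Set (Fin (ℓ + 1) → ℝ)}
    {f Φ : (Fin (ℓ + 1) → ℝ) → (Fin (ℓ + 1) → ℝ)}
    (hf : Morphism X Y f) (a b : ℤ) (hΦ : ∀ x ∈ X, Φ (tmap a x) = tmap b (f x)) :
    Morphism (tmap a '' X) (tmap b '' Y) Φ := by
  have hback : Morphism (tmap a '' X) X (tmap (-a : ℤ)) := by
    simpa [image_image] using morphism_tmap (tmap a '' X) (-a)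
  refine ((hback.comp hf).comp (morphism_tmap Y b)).congr ?_
  rintro _ ⟨x, hx, rfl⟩
  simp [hΦ x hx]

end Morphisms

section Tower

/- A tower has pieces of widths `w i`, positive for the interval pieces (`i` even) and zero for
the point pieces (`i` odd). Its `i`-th piece lies over `baseRange i (w i)`, and over
`pieceRange w i` once translated by `pieceStart w i = w 0 + ⋯ + w (i - 1)`. -/
def pieceStart (w : ℕ → ℕ) (i : ℕ) : ℕ := ∑ j ∈ Finset.range i, w j

def baseRange (i : ℕ) (a : ℝ) : Set ℝ := if i % 2 = 0 then Ioo 0 a else {0}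

def pieceRange (w : ℕ → ℕ) (i : ℕ) : Set ℝ := (· + (pieceStart w i : ℝ)) '' baseRange i (w i)

lemma pieceStart_succ (w : ℕ → ℕ) (i : ℕ) : pieceStart w (i + 1) = pieceStart w i + w i :=
  Finset.sum_range_succ w i

lemma pieceStart_mono (w : ℕ → ℕ) : Monotone (pieceStart w) := fun _ _ hij =>
  Finset.sum_le_sum_of_subset (Finset.range_subset_range.mpr hij)

lemma cellSaturated_baseRange (i a : ℕ) : CellSaturated (baseRange i a) := by
  unfold baseRange
  split_ifs
  · simpa using cellSaturated_Ioo_intCast 0 a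
  · simpa using cellSaturated_singleton_intCast 0

lemma csSup_baseRange {i a : ℕ} (h : 0 < a ↔ i % 2 = 0) : sSup (baseRange i a) = a := by
  unfold baseRange
  split_ifs with hi
  · exact csSup_Ioo (by exact_mod_cast h.mpr hi)
  · rw [csSup_singleton, Nat.eq_zero_of_not_pos (mt h.mp hi), Nat.cast_zero]

lemma pieceRange_of_even (w : ℕ → ℕ) {i : ℕ} (hi : i % 2 = 0) :
    pieceRange w i = Ioo (pieceStart w i : ℝ) (pieceStart w (i + 1)) := by
  simp [pieceRange, baseRange, hi, pieceStart_succ, add_comm]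

lemma pieceRange_of_odd (w : ℕ → ℕ) {i : ℕ} (hi : i % 2 = 1) :
    pieceRange w i = {(pieceStart w i : ℝ)} := by
  simp [pieceRange, baseRange, hi]

lemma cellSaturated_pieceRange (w : ℕ → ℕ) (i : ℕ) : CellSaturated (pieceRange w i) := by
  rcases Nat.mod_two_eq_zero_or_one i with hi | hi
  · simpa [pieceRange_of_even w hi] using
      cellSaturated_Ioo_intCast (pieceStart w i) (pieceStart w (i + 1))
  · simpa [pieceRange_of_odd w hi] using cellSaturated_singleton_intCast (pieceStart w i)

lemma mem_pieceRange_bounds {w : ℕ → ℕ} (hw : ∀ i, 0 < w i ↔ i % 2 = 0) {i : ℕ} {p : ℝ}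
    (hp : p ∈ pieceRange w i) :
    ((pieceStart w i : ℝ) < p ∨ p = pieceStart w i ∧ i % 2 = 1) ∧
      (p < pieceStart w (i + 1) ∨ p = pieceStart w (i + 1) ∧ i % 2 = 1) := by
  rcases Nat.mod_two_eq_zero_or_one i with hi | hi
  · rw [pieceRange_of_even w hi] at hp
    exact ⟨Or.inl hp.1, Or.inl hp.2⟩
  · rw [pieceRange_of_odd w hi, mem_singleton_iff] at hp
    have hwi : w i = 0 := Nat.eq_zero_of_not_pos fun h => absurd ((hw i).mp h) (by omega)
    rw [pieceStart_succ, hwi, add_zero]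
    exact ⟨Or.inr ⟨hp, hi⟩, Or.inr ⟨hp, hi⟩⟩

lemma strictlyOrdered_pieceRange {w : ℕ → ℕ} (hw : ∀ i, 0 < w i ↔ i % 2 = 0) (S : Finset ℕ) :
    StrictlyOrdered S (pieceRange w) := by
  intro i _ j _ hij p hp q hq
  have hstart : (pieceStart w (i + 1) : ℝ) ≤ pieceStart w j := by
    exact_mod_cast pieceStart_mono w hij
  rcases (mem_pieceRange_bounds hw hp).2 with hp | ⟨rfl, hi⟩
  · rcases (mem_pieceRange_bounds hw hq).1 with hq | ⟨rfl, _⟩ <;> linarith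
  rcases (mem_pieceRange_bounds hw hq).1 with hq | ⟨rfl, hj⟩
  · linarith
  -- between two point cells lies the interval cell `i + 1`, of positive width
  have hgap : pieceStart w (i + 1) < pieceStart w j := by
    have := pieceStart_mono w (show i + 1 + 1 ≤ j by omega)
    have := (hw (i + 1)).mpr (by omega)
    have := pieceStart_succ w (i + 1)
    omega
  exact_mod_cast hgap

lemma pieceStart_pos {w : ℕ → ℕ} (hw : ∀ i, 0 < w i ↔ i % 2 = 0) {i : ℕ} (hi : 0 < i) :
    0 < pieceStart w i :=
  calc 0 < pieceStart w 1 := by simpa [pieceStart] using (hw 0).mpr rfl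
    _ ≤ pieceStart w i := pieceStart_mono w hi

lemma biUnion_pieceRange {w : ℕ → ℕ} (hw : ∀ i, 0 < w i ↔ i % 2 = 0) {N : ℕ}
    (hN : N % 2 = 1) : ⋃ i ∈ Finset.range N, pieceRange w i = Ioo 0 (pieceStart w N : ℝ) := by
  obtain ⟨k, rfl⟩ : ∃ k, N = 2 * k + 1 := ⟨N / 2, by omega⟩
  induction k with
  | zero => simp [pieceRange_of_even, pieceStart]
  | succ k ih =>
    have hodd : (2 * k + 1) % 2 = 1 := by omega
    have heven : (2 * k + 2) % 2 = 0 := by omega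
    have h₀ := pieceStart_pos hw (show 0 < 2 * k + 1 by omega)
    have h₁ : pieceStart w (2 * k + 2) = pieceStart w (2 * k + 1) := by
      rw [pieceStart_succ, Nat.eq_zero_of_not_pos (mt (hw _).mp (by omega)), add_zero]
    have h₂ : pieceStart w (2 * k + 2) < pieceStart w (2 * k + 2 + 1) := by
      have := pieceStart_succ w (2 * k + 2)
      have := (hw (2 * k + 2)).mpr heven
      omega
    have h₀' : (0 : ℝ) < pieceStart w (2 * k + 1) := by exact_mod_cast h₀
    have h₂' : (pieceStart w (2 * k + 1) : ℝ) < pieceStart w (2 * k + 2 + 1) := by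
      rw [← h₁]; exact_mod_cast h₂
    rw [show 2 * (k + 1) + 1 = 2 * k + 1 + 1 + 1 by ring, Finset.range_add_one,
      Finset.range_add_one, Finset.set_biUnion_insert, Finset.set_biUnion_insert, ih (by omega),
      pieceRange_of_even w heven, pieceRange_of_odd w hodd, h₁, ← union_assoc,
      Ioo_union_left h₂', union_comm, Ioo_union_Ico_eq_Ioo h₀' h₂'.le]

end Tower

section CellWidth

/- `(0, n)` is itself a tower: the one of its integer cells `cSeq i`, of widths `cellWidth i`. -/
def cellWidth (i : ℕ) : ℕ := if i % 2 = 0 then 1 else 0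

lemma cellWidth_pos_iff (i : ℕ) : 0 < cellWidth i ↔ i % 2 = 0 := by
  unfold cellWidth
  split_ifs <;> simp [*]

lemma pieceStart_cellWidth (i : ℕ) : pieceStart cellWidth i = (i + 1) / 2 := by
  induction i with
  | zero => rfl
  | succ i ih =>
    rw [pieceStart_succ, ih]
    unfold cellWidth
    split_ifs <;> omega

lemma tgtShift_eq_pieceStart (i : ℕ) : tgtShift i = pieceStart cellWidth i := by
  rw [pieceStart_cellWidth, tgtShift]
  split_ifs with hi
  · congr 1
    omega
  · rfl

lemma cSeq_eq (i : ℕ) : cSeq i = {x | x 0 ∈ pieceRange cellWidth i} := by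
  rw [cSeq]
  split_ifs with hi
  · rw [pieceRange_of_even _ hi, pieceStart_cellWidth, pieceStart_cellWidth]
    have h₁ : (i + 1) / 2 = i / 2 := by omega
    have h₂ : (i + 1 + 1) / 2 = i / 2 + 1 := by omega
    simp [h₁, h₂]
  · rw [pieceRange_of_odd _ (by omega), pieceStart_cellWidth]
    simp

lemma cell1_pieceRange_cellWidth (i : ℕ) : Cell1 (pieceRange cellWidth i) := by
  rcases Nat.mod_two_eq_zero_or_one i with hi | hi
  · refine ⟨pieceStart cellWidth i, Or.inr ?_⟩
    simp [pieceRange_of_even _ hi, pieceStart_succ, cellWidth, hi]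
  · exact ⟨pieceStart cellWidth i, Or.inl (by simp [pieceRange_of_odd _ hi])⟩

lemma biUnion_pieceRange_cellWidth (n : ℕ) :
    ⋃ i ∈ Finset.range (2 * n - 1), pieceRange cellWidth i = Ioo 0 (n : ℝ) := by
  rcases Nat.eq_zero_or_pos n with rfl | hn
  · simp
  · rw [biUnion_pieceRange cellWidth_pos_iff (by omega), pieceStart_cellWidth,
      show (2 * n - 1 + 1) / 2 = n by omega]

lemma mem_cellsOf_F1set_iff {n : ℕ} {C : Set (Fin 1 → ℝ)} :
    C ∈ cellsOf (F1set n) ↔ ∃ i < 2 * n - 1, C = cSeq i := by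
  constructor
  · rintro ⟨hC, hCn⟩
    obtain ⟨c, hc, rfl⟩ := cell_fin_one_iff.mp hC
    obtain ⟨p, hp⟩ := hc.nonempty
    have hpn : p ∈ Ioo 0 (n : ℝ) := hCn (show (fun _ : Fin 1 => p) ∈ _ from hp)
    rw [← biUnion_pieceRange_cellWidth, mem_iUnion₂] at hpn
    obtain ⟨i, hi, hpi⟩ := hpn
    refine ⟨i, Finset.mem_range.mp hi, ?_⟩
    rw [cSeq_eq, hc.eq_of_mem (cell1_pieceRange_cellWidth i) hp hpi]
  · rintro ⟨i, hi, rfl⟩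
    rw [cSeq_eq]
    refine setOf_mem_cellsOf_F1set (cell1_pieceRange_cellWidth i) ?_
    rw [← biUnion_pieceRange_cellWidth]
    exact subset_biUnion_of_mem (u := pieceRange cellWidth) (Finset.mem_range.mpr hi)

lemma ltimes_eq_biUnion {m n : ℕ} (s : Set (Fin 1 → ℝ) → Set (Fin m → ℝ)) :
    ltimes n s = ⋃ i ∈ Finset.range (2 * n - 1),
      {x : Fin (m + 1) → ℝ | x 0 ∈ pieceRange cellWidth i ∧ Fin.tail x ∈ s (cSeq i)} := by
  ext x
  simp only [ltimes, mem_iUnion₂, Finset.mem_range, mem_cellsOf_F1set_iff]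
  constructor
  · rintro ⟨_, ⟨i, hi, rfl⟩, hx, hxs⟩
    exact ⟨i, hi, by simpa [cSeq_eq] using hx, hxs⟩
  · rintro ⟨i, hi, hx, hxs⟩
    exact ⟨_, ⟨i, hi, rfl⟩, by simpa [cSeq_eq] using hx, hxs⟩

end CellWidth

section TowerOfForts

variable {m : ℕ}

lemma IsFortOver.image_tmap_pieceStart {w : ℕ → ℕ} {i : ℕ} {X : Set (Fin (m + 1) → ℝ)}
    (h : IsFortOver X (baseRange i (w i))) :
    IsFortOver (tmap (pieceStart w i) '' X) (pieceRange w i) := by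
  have := h.image_tmap (pieceStart w i)
  rwa [Int.cast_natCast] at this

lemma exists_widths_isFortOver {N : ℕ} (hm : m ≠ 0) {F : ℕ → Set (Fin (m + 1) → ℝ)}
    (heven : ∀ i < N, i % 2 = 0 → Fort (m + 1) (F i))
    (hodd : ∀ i < N, i % 2 = 1 →
      ∃ K, Fort m K ∧ F i = {x : Fin (m + 1) → ℝ | x 0 = 0 ∧ Fin.tail x ∈ K}) :
    ∃ w : ℕ → ℕ, (∀ i, 0 < w i ↔ i % 2 = 0) ∧ ∀ i < N, IsFortOver (F i) (baseRange i (w i)) := by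
  have : ∀ i, ∃ a : ℕ, (0 < a ↔ i % 2 = 0) ∧ (i < N → IsFortOver (F i) (baseRange i a)) := by
    intro i
    rcases Nat.mod_two_eq_zero_or_one i with h | h
    · by_cases hi : i < N
      · obtain ⟨a, ha, hX⟩ := (heven i hi h).isFortOver hm
        exact ⟨a, by simp [ha, h], fun _ => by simpa [baseRange, h] using hX⟩
      · exact ⟨1, by simp [h], fun h' => absurd h' hi⟩
    · refine ⟨0, by simp [h], fun hi => ?_⟩
      obtain ⟨K, hK, hFK⟩ := hodd i hi h
      simpa [baseRange, h, hFK] using isFortOver_zero_prod hK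
  choose w hw hFw using this
  exact ⟨w, hw, hFw⟩

variable {w : ℕ → ℕ} {N : ℕ} {F : ℕ → Set (Fin (m + 1) → ℝ)}

lemma offsets_eq_pieceStart (hw : ∀ i, 0 < w i ↔ i % 2 = 0)
    (hF : ∀ i < N, IsFortOver (F i) (baseRange i (w i))) {i : ℕ} (hi : i ≤ N) :
    offsets F i = pieceStart w i := by
  rw [offsets, pieceStart, Nat.cast_sum]
  refine Finset.sum_congr rfl fun j hj => ?_
  rw [(hF j ((Finset.mem_range.mp hj).trans_le hi)).image_fst (cellSaturated_baseRange j (w j)),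
    csSup_baseRange (hw j)]

lemma fort_tower (hw : ∀ i, 0 < w i ↔ i % 2 = 0) (hN : N % 2 = 1)
    (hF : ∀ i < N, IsFortOver (F i) (baseRange i (w i))) :
    Fort (m + 1) (⋃ i ∈ Finset.range N, tmap (offsets F i) '' F i) := by
  have hU := IsFortOver.biUnion (S := Finset.range N) (X := fun i => tmap (offsets F i) '' F i)
    (fun i hi => by
      rw [offsets_eq_pieceStart hw hF (Finset.mem_range.mp hi).le]
      exact (hF i (Finset.mem_range.mp hi)).image_tmap_pieceStart)
    (fun i _ => cellSaturated_pieceRange w i) (strictlyOrdered_pieceRange hw _).pairwiseDisjoint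
  rw [biUnion_pieceRange hw hN] at hU
  exact hU.fort (pieceStart_pos hw (by omega))

lemma morphism_tower {v : ℕ → ℕ} (hw : ∀ i, 0 < w i ↔ i % 2 = 0)
    (hv : ∀ i, 0 < v i ↔ i % 2 = 0) (hF : ∀ i < N, IsFortOver (F i) (baseRange i (w i)))
    {Y : ℕ → Set (Fin (m + 1) → ℝ)} (hY : ∀ i < N, ∀ y ∈ Y i, y 0 ∈ baseRange i (v i))
    {φ : ℕ → (Fin (m + 1) → ℝ) → (Fin (m + 1) → ℝ)} (hφ : ∀ i < N, Morphism (F i) (Y i) (φ i))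
    {Φ : (Fin (m + 1) → ℝ) → (Fin (m + 1) → ℝ)}
    (hΦ : ∀ i < N, ∀ x ∈ F i, Φ (tmap (offsets F i) x) = tmap (pieceStart v i) (φ i x)) :
    Morphism (⋃ i ∈ Finset.range N, tmap (offsets F i) '' F i)
      (⋃ i ∈ Finset.range N, tmap (pieceStart v i) '' Y i) Φ := by
  have hoff : ∀ i < N, offsets F i = pieceStart w i := fun i hi =>
    offsets_eq_pieceStart hw hF hi.le
  refine Morphism.biUnion (R := pieceRange w) (T := pieceRange v) (fun i hi => ?_)
    (fun i hi => ?_) (fun i hi => ?_) (fun i _ => cellSaturated_pieceRange w i)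
    (strictlyOrdered_pieceRange hw _) (strictlyOrdered_pieceRange hv _)
  all_goals rw [Finset.mem_range] at hi
  · have := (hφ i hi).conj_tmap (Φ := Φ) (pieceStart w i) (pieceStart v i)
    simp only [Int.cast_natCast] at this
    rw [hoff i hi]
    exact this fun x hx => by rw [← hoff i hi, hΦ i hi x hx]
  · rw [hoff i hi]
    exact (hF i hi).image_tmap_pieceStart.1
  · rintro _ ⟨y, hy, rfl⟩
    exact ⟨y 0, hY i hi y hy, by simp⟩

end TowerOfForts

/-- The tower construction: given, for each of the `2n - 1` integer cells `𝒞ᵢ` of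
`ℱ¹ = (0, n)`, a morphism `φᵢ : ℱᵢ → b(𝒞ᵢ) × s(𝒞ᵢ)` (a morphism `ℱᵢ → (0,1) ⋉ s(𝒞ᵢ)` for
interval cells; for point cells, `ℱᵢ = {0} × 𝒦ᵢ` and `φᵢ = id × ψᵢ` for a morphism
`ψᵢ : 𝒦ᵢ → s(𝒞ᵢ)`), the union `ℱ = ⋃ᵢ t_{m₀+⋯+m_{i-1}}(ℱᵢ)` is a fort, and the map
equal on `t_{m₀+⋯+m_{i-1}}(ℱᵢ)` to `t_{−(m₀+⋯+m_{i-1})}` followed by `φᵢ` followed by the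
translation carrying `b(𝒞ᵢ)` onto `𝒞ᵢ` is a morphism `ℱ → ℱ¹ ⋉ s`. -/
theorem tower_construction (m n : ℕ) (hn : 0 < n)
    (s : Set (Fin 1 → ℝ) → Set (Fin m → ℝ))
    (hs : ∀ C ∈ cellsOf (F1set n), Fort m (s C))
    (F : ℕ → Set (Fin (m + 1) → ℝ)) (φ : ℕ → (Fin (m + 1) → ℝ) → (Fin (m + 1) → ℝ))
    (K : ℕ → Set (Fin m → ℝ)) (ψ : ℕ → (Fin m → ℝ) → (Fin m → ℝ))
    (heven : ∀ i < 2 * n - 1, i % 2 = 0 → Fort (m + 1) (F i) ∧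
      Morphism (F i)
        {x : Fin (m + 1) → ℝ | x 0 ∈ Set.Ioo (0 : ℝ) 1 ∧ Fin.tail x ∈ s (cSeq i)} (φ i))
    (hodd : ∀ i < 2 * n - 1, i % 2 = 1 → Fort m (K i) ∧ Morphism (K i) (s (cSeq i)) (ψ i) ∧
      F i = {x : Fin (m + 1) → ℝ | x 0 = 0 ∧ Fin.tail x ∈ K i} ∧
      ∀ x : Fin (m + 1) → ℝ, φ i x = Fin.cons 0 (ψ i (Fin.tail x))) :
    Fort (m + 1) (⋃ i ∈ Finset.range (2 * n - 1), tmap (offsets F i) '' F i) ∧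
    ∀ Φ : (Fin (m + 1) → ℝ) → (Fin (m + 1) → ℝ),
      (∀ i < 2 * n - 1, ∀ x ∈ F i, Φ (tmap (offsets F i) x) = tmap (tgtShift i) (φ i x)) →
      Morphism (⋃ i ∈ Finset.range (2 * n - 1), tmap (offsets F i) '' F i)
        (ltimes n s) Φ := by
  have hm : m ≠ 0 := by
    rintro rfl
    exact not_fort_zero _ (hs _ (unit_cell_mem_cellsOf_F1set hn))
  obtain ⟨w, hw, hF⟩ := exists_widths_isFortOver hm (fun i hi h => (heven i hi h).1)
    fun i hi h => ⟨K i, (hodd i hi h).1, (hodd i hi h).2.2.1⟩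
  refine ⟨fort_tower hw (by omega) hF, fun Φ hΦ => ?_⟩
  have hφ : ∀ i < 2 * n - 1, Morphism (F i)
      {x : Fin (m + 1) → ℝ | x 0 ∈ baseRange i (cellWidth i) ∧ Fin.tail x ∈ s (cSeq i)} (φ i) := by
    intro i hi
    rcases Nat.mod_two_eq_zero_or_one i with h | h
    · simpa [baseRange, cellWidth, h] using (heven i hi h).2
    · obtain ⟨-, hψ, hFK, hφψ⟩ := hodd i hi h
      rw [hFK, funext hφψ]
      simpa [baseRange, h] using hψ.zero_prod
  have := morphism_tower (Φ := Φ) hw cellWidth_pos_iff hF (fun _ _ _ hy => hy.1) hφ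
    fun i hi x hx => by rw [hΦ i hi x hx, tgtShift_eq_pieceStart]
  rw [ltimes_eq_biUnion]
  simp only [image_tmap_prod] at this
  exact this

end Forts
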